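/- Let T' = {(ξ,η) : 0 ≤ η ≤ ξ ≤ 1}, let p₁, p₂, q₁, q₂ ∈ ℝ, and let N ≥ max{1, |p₁|, |p₂|, |q₁|, |q₂|}. Suppose δ(ξ,η,t) = Σ_{n≥0} dₙ(ξ,η)tⁿ and δ_c(ξ,η,t) = Σ_{n≥0} d_{c,n}(ξ,η)tⁿ with dₙ, d_{c,n} continuous on T' and |dₙ(ξ,η)| ≤ N, |d_{c,n}(ξ,η)| ≤ N for all n and (ξ,η) ∈ T'. Define G₀(ξ,η,t) = −(1/2)∫_η^ξ δ(τ,0,t)dτ, G_{c,0}(ξ,η,t) = (1/2)∫_η^ξ δ_c(τ,0,t)dτ, and recursively G_{n+1}(ξ,η,t) = ∫_η^ξ∫₀^η [(δ(τ,s,t)+p₁∂/∂t)Gₙ(τ,s,t) + (δ_c(τ,s,t)+p₂∂/∂t)G_{c,n}(τ,s,t)] ds dτ and G_{c,n+1}(ξ,η,t) = ∫_η^ξ∫₀^η [(δ(τ,s,t)+q₁∂/∂t)G_{c,n}(τ,s,t) + (−δ_c(τ,s,t)+q₂∂/∂t)Gₙ(τ,s,t)] ds dτ. Then for every n ≥ 0,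 every (ξ,η) ∈ T', and every t ∈ (0,1): |Gₙ(ξ,η,t)| ≤ (4ξη)ⁿ N^{n+1} / n! · (1−t)^{−(n+1)} and |G_{c,n}(ξ,η,t)| ≤ (4ξη)ⁿ N^{n+1} / n! · (1−t)^{−(n+1)}. -/

import Mathlib

open Set intervalIntegral

/-- The triangle `T' = {(ξ,η) : 0 ≤ η ≤ ξ ≤ 1}`. -/
def Tri : Set (ℝ × ℝ) := {p : ℝ × ℝ | 0 ≤ p.2 ∧ p.2 ≤ p.1 ∧ p.1 ≤ 1}

/-- Partial derivative in the last (time) variable. -/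
noncomputable def pT (G : ℝ → ℝ → ℝ → ℝ) (ξ η t : ℝ) : ℝ := deriv (fun t' => G ξ η t') t

set_option maxHeartbeats 4000000

noncomputable def clampT (p : ℝ × ℝ) : ℝ × ℝ :=
  (max (max 0 (min p.2 1)) (min p.1 1), max 0 (min p.2 1))

lemma continuous_clampT : Continuous clampT := by
  unfold clampT; fun_prop

lemma clampT_mem_Tri (p : ℝ × ℝ) : clampT p ∈ Tri := by
  refine ⟨le_max_left _ _, le_max_left _ _, ?_⟩
  exact max_le (max_le zero_le_one (min_le_right _ _)) (min_le_right _ _)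

lemma clampT_eq_self {p : ℝ × ℝ} (hp : p ∈ Tri) : clampT p = p := by
  obtain ⟨h1, h2, h3⟩ := hp
  have hp2 : p.2 ≤ 1 := h2.trans h3
  have hp1 : 0 ≤ p.1 := h1.trans h2
  simp only [clampT, min_eq_left hp2, max_eq_right h1, min_eq_left h3, max_eq_right h2]

lemma hockey (n m : ℕ) :
    ∑ j ∈ Finset.range (m + 1), (j + n).choose n = (m + n + 1).choose (n + 1) := by
  induction m with
  | zero => simp
  | succ m ih =>
      rw [Finset.sum_range_succ, ih]
      have : m + 1 + n + 1 = (m + n + 1) + 1 := by omega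
      rw [this, Nat.choose_succ_succ (m + n + 1) n]
      have e : m + 1 + n = m + n + 1 := by omega
      rw [e]; simp only [Nat.succ_eq_add_one]; omega

lemma deriv_choose_id (n m : ℕ) :
    (m + 1) * (m + n + 1).choose n = (n + 1) * (m + n + 1).choose (n + 1) := by
  have h1 := Nat.add_one_mul_choose_eq (m + n) n
  have h2 := Nat.add_one_mul_choose_eq (m + n) m
  have e1 : (m + n).choose m = (m + n).choose n := Nat.choose_symm_add
  have e2 : (m + n + 1).choose (m + 1) = (m + n + 1).choose n := by
    have : m + n + 1 = (m + 1) + n := by omega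
    rw [this]; exact Nat.choose_symm_add
  rw [e1, e2] at h2
  rw [mul_comm (m + 1), mul_comm (n + 1), ← h1, ← h2]

lemma hasSum_choose_geom (n : ℕ) {r : ℝ} (h0 : 0 ≤ r) (h1 : r < 1) :
    HasSum (fun m => (((m + n).choose n : ℕ) : ℝ) * r ^ m) ((1 - r)⁻¹ ^ (n + 1)) := by
  induction n with
  | zero => simpa using hasSum_geometric_of_lt_one h0 h1
  | succ n ih =>
      have hnn : ∀ m, 0 ≤ (((m + n).choose n : ℕ) : ℝ) * r ^ m := fun m => by positivity
      have hf : Summable fun m => ‖(((m + n).choose n : ℕ) : ℝ) * r ^ m‖ := by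
        refine ih.summable.congr fun m => ?_
        rw [Real.norm_of_nonneg (hnn m)]
      have hgeom := hasSum_geometric_of_lt_one h0 h1
      have hg : Summable fun m : ℕ => ‖r ^ m‖ := by
        refine hgeom.summable.congr fun m => ?_
        rw [Real.norm_of_nonneg (by positivity)]
      have H := hasSum_sum_range_mul_of_summable_norm (R := ℝ) hf hg
      rw [ih.tsum_eq, hgeom.tsum_eq] at H
      have hfun : (fun m => ∑ k ∈ Finset.range (m + 1),
          ((((k + n).choose n : ℕ) : ℝ) * r ^ k) * r ^ (m - k))
          = fun m => (((m + (n + 1)).choose (n + 1) : ℕ) : ℝ) * r ^ m := by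
        funext m
        have : ∀ k ∈ Finset.range (m + 1),
            ((((k + n).choose n : ℕ) : ℝ) * r ^ k) * r ^ (m - k)
            = (((k + n).choose n : ℕ) : ℝ) * r ^ m := by
          intro k hk
          have hk' : k ≤ m := Nat.lt_succ_iff.mp (Finset.mem_range.mp hk)
          rw [mul_assoc, ← pow_add, Nat.add_sub_cancel' hk']
        rw [Finset.sum_congr rfl this, ← Finset.sum_mul, ← Nat.cast_sum, hockey]
        have : m + (n + 1) = m + n + 1 := by omega
        rw [this]
      rw [hfun] at H
      rw [← pow_succ] at H; exact H

open MeasureTheory in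
lemma tsum_intervalIntegral_swap {F : ℕ → ℝ → ℝ} {a b : ℝ} (hab : a ≤ b)
    (hc : ∀ m, Continuous (F m)) {u : ℕ → ℝ} (hu : Summable u)
    (hbd : ∀ m x, |F m x| ≤ u m) :
    ∫ x in a..b, (∑' m, F m x) = ∑' m, ∫ x in a..b, F m x := by
  have hint : ∀ m, Integrable (F m) (volume.restrict (Set.Ioc a b)) := fun m =>
    (hc m).integrableOn_Ioc
  have hsum : Summable fun m => ∫ x in Set.Ioc a b, ‖F m x‖ := by
    refine Summable.of_nonneg_of_le (fun m => integral_nonneg fun x => norm_nonneg _)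
      (fun m => ?_) (hu.mul_left (b - a))
    calc ∫ x in Set.Ioc a b, ‖F m x‖ ≤ ∫ _x in Set.Ioc a b, u m := by
          refine setIntegral_mono_on (hint m).norm ?_ measurableSet_Ioc
            fun x _ => (Real.norm_eq_abs (F m x)) ▸ hbd m x
          refine integrableOn_const ?_
          rw [Real.volume_Ioc]; exact ENNReal.ofReal_ne_top
      _ = (b - a) * u m := by
          rw [setIntegral_const, Real.volume_real_Ioc_of_le hab, smul_eq_mul]
  rw [intervalIntegral.integral_of_le hab,
    ← MeasureTheory.integral_tsum_of_summable_integral_norm hint hsum]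
  exact tsum_congr fun m => (intervalIntegral.integral_of_le hab).symm

lemma hasSum_pT_of_rep {f : ℝ → ℝ} {a : ℕ → ℝ} {K : ℝ} {n : ℕ}
    (hb : ∀ m, |a m| ≤ K * ((m + n).choose n : ℕ))
    (hrep : ∀ t' ∈ Set.Ioo (0:ℝ) 1, f t' = ∑' m, a m * t' ^ m)
    {t : ℝ} (ht : t ∈ Set.Ioo (0:ℝ) 1) :
    HasSum (fun m : ℕ => ((m : ℝ) + 1) * a (m + 1) * t ^ m) (deriv f t) := by
  obtain ⟨ht0, ht1⟩ := ht
  have hK : 0 ≤ K := by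
    have h := hb 0
    simp only [Nat.zero_add, Nat.choose_self, Nat.cast_one, mul_one] at h
    exact (abs_nonneg _).trans h
  set r : ℝ := (1 + t) / 2 with hr
  have hr0 : 0 < r := by rw [hr]; linarith
  have htr : t < r := by rw [hr]; linarith
  have hr1 : r < 1 := by rw [hr]; linarith
  set u : ℕ → ℝ := fun m => K * (m : ℝ) * (((m + n).choose n : ℕ) : ℝ) * r ^ (m - 1)
    with hu_def
  have hu : Summable u := by
    rw [← summable_nat_add_iff 1]
    have base := ((hasSum_choose_geom (n + 1) hr0.le hr1).summable).mul_left
      (K * ((n : ℝ) + 1))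
    refine base.congr fun m => ?_
    have hnat : (m + 1) * ((m + 1 + n).choose n) = (n + 1) * ((m + (n + 1)).choose (n + 1)) := by
      have h1 : m + 1 + n = m + n + 1 := by omega
      have h2 : m + (n + 1) = m + n + 1 := by omega
      rw [h1, h2]; exact deriv_choose_id n m
    have hreal : ((m : ℝ) + 1) * (((m + 1 + n).choose n : ℕ) : ℝ)
        = ((n : ℝ) + 1) * (((m + (n + 1)).choose (n + 1) : ℕ) : ℝ) := by
      exact_mod_cast congrArg (Nat.cast (R := ℝ)) hnat
    simp only [hu_def, Nat.add_sub_cancel]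
    push_cast at hreal ⊢
    linear_combination (-(K * r ^ m)) * hreal
  have hg : ∀ m y, y ∈ Set.Ioo (-r) r →
      HasDerivAt (fun z : ℝ => a m * z ^ m) (a m * ((m : ℝ) * y ^ (m - 1))) y :=
    fun m y _ => (hasDerivAt_pow m y).const_mul (a m)
  have hg' : ∀ m y, y ∈ Set.Ioo (-r) r → ‖a m * ((m : ℝ) * y ^ (m - 1))‖ ≤ u m := by
    intro m y hy
    have hyr : |y| ≤ r := by
      rw [abs_le]; exact ⟨hy.1.le, hy.2.le⟩
    rw [Real.norm_eq_abs, abs_mul, abs_mul, abs_of_nonneg (by positivity : (0:ℝ) ≤ (m:ℝ)),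
      abs_pow]
    calc |a m| * ((m : ℝ) * |y| ^ (m - 1))
        ≤ (K * ((m + n).choose n : ℕ)) * ((m : ℝ) * r ^ (m - 1)) := by
          apply mul_le_mul (hb m) ?_ (by positivity) ?_
          · exact mul_le_mul_of_nonneg_left (pow_le_pow_left₀ (abs_nonneg _) hyr _)
              (by positivity)
          · positivity
      _ = u m := by rw [hu_def]; ring
  have hg0 : Summable fun m => a m * (0 : ℝ) ^ m := by
    apply summable_of_ne_finset_zero (s := ({0} : Finset ℕ))
    intro m hm
    have : m ≠ 0 := by simpa using hm
    simp [zero_pow this]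
  have HD := hasDerivAt_tsum_of_isPreconnected hu isOpen_Ioo
    (convex_Ioo (-r) r).isPreconnected hg hg'
    (show (0:ℝ) ∈ Set.Ioo (-r) r from ⟨by linarith, hr0⟩) hg0
    (show t ∈ Set.Ioo (-r) r from ⟨by linarith, htr⟩)
  have hev : f =ᶠ[nhds t] fun z => ∑' m, a m * z ^ m := by
    filter_upwards [Ioo_mem_nhds ht0 ht1] with x hx using hrep x hx
  rw [hev.deriv_eq, HD.deriv]
  have hsumm : Summable fun m => a m * ((m : ℝ) * t ^ (m - 1)) := by
    refine Summable.of_norm_bounded hu fun m => hg' m t ⟨by linarith, htr⟩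
  have H2 := (hasSum_nat_add_iff' (f := fun m => a m * ((m : ℝ) * t ^ (m - 1))) 1).mpr
    hsumm.hasSum
  have heq : (fun m => a (m + 1) * (((m + 1 : ℕ) : ℝ) * t ^ (m + 1 - 1)))
      = fun m : ℕ => ((m : ℝ) + 1) * a (m + 1) * t ^ m := by
    funext m
    rw [Nat.add_sub_cancel]
    push_cast
    ring
  rw [heq] at H2
  simpa using H2

noncomputable def Bnd (N : ℝ) (n : ℕ) (p : ℝ × ℝ) : ℝ :=
  (4 * p.1 * p.2) ^ n * N ^ (n + 1) / (Nat.factorial n)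

noncomputable def Kglob (N : ℝ) (n : ℕ) : ℝ :=
  (4 : ℝ) ^ n * N ^ (n + 1) / (Nat.factorial n)

lemma Kglob_pos {N : ℝ} (hN : 1 ≤ N) (n : ℕ) : 0 < Kglob N n :=
  div_pos (mul_pos (pow_pos four_pos n) (pow_pos (by linarith) _))
    (Nat.cast_pos.2 n.factorial_pos)

lemma Bnd_nonneg {N : ℝ} (hN : 1 ≤ N) {n : ℕ} {p : ℝ × ℝ} (hp : p ∈ Tri) :
    0 ≤ Bnd N n p := by
  obtain ⟨h1, h2, h3⟩ := hp
  have hp1 : 0 ≤ p.1 := h1.trans h2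
  apply div_nonneg _ (Nat.cast_nonneg _)
  exact mul_nonneg (pow_nonneg (by nlinarith) n) (pow_nonneg (by linarith) _)

lemma Bnd_le_Kglob {N : ℝ} (hN : 1 ≤ N) {n : ℕ} {p : ℝ × ℝ} (hp : p ∈ Tri) :
    Bnd N n p ≤ Kglob N n := by
  obtain ⟨h1, h2, h3⟩ := hp
  have hp1 : 0 ≤ p.1 := h1.trans h2
  have hp2 : p.2 ≤ 1 := h2.trans h3
  unfold Bnd Kglob
  rw [div_le_div_iff_of_pos_right (Nat.cast_pos.2 n.factorial_pos)]
  exact mul_le_mul_of_nonneg_right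
    (pow_le_pow_left₀ (by nlinarith) (by nlinarith) n) (pow_nonneg (by linarith) _)

lemma sum_choose_sub (n m : ℕ) :
    ∑ j ∈ Finset.range (m + 1), ((m - j) + n).choose n = (m + n + 1).choose (n + 1) := by
  have h := Finset.sum_range_reflect (fun i => (i + n).choose n) (m + 1)
  simp only [Nat.add_sub_cancel] at h
  rw [h, hockey]

lemma step_lemma
    (N : ℝ) (hN1 : 1 ≤ N) (n : ℕ)
    (d1 d2 : ℕ → ℝ × ℝ → ℝ)
    (hd1c : ∀ j, Continuous (d1 j)) (hd2c : ∀ j, Continuous (d2 j))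
    (hd1b : ∀ j p, |d1 j p| ≤ N) (hd2b : ∀ j p, |d2 j p| ≤ N)
    (c1 c2 : ℝ) (hc1 : |c1| ≤ N) (hc2 : |c2| ≤ N)
    (e1 e2 A B H : ℝ → ℝ → ℝ → ℝ)
    (he1 : ∀ p : ℝ × ℝ, p ∈ Tri → ∀ t ∈ Set.Ioo (0:ℝ) 1,
      e1 p.1 p.2 t = ∑' j, d1 j p * t ^ j)
    (he2 : ∀ p : ℝ × ℝ, p ∈ Tri → ∀ t ∈ Set.Ioo (0:ℝ) 1,
      e2 p.1 p.2 t = ∑' j, d2 j p * t ^ j)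
    (a b : ℕ → ℝ × ℝ → ℝ)
    (haC : ∀ m, Continuous (a m)) (hbC : ∀ m, Continuous (b m))
    (haT : ∀ m (p : ℝ × ℝ), p ∈ Tri → |a m p| ≤ Bnd N n p * ((m + n).choose n : ℕ))
    (hbT : ∀ m (p : ℝ × ℝ), p ∈ Tri → |b m p| ≤ Bnd N n p * ((m + n).choose n : ℕ))
    (haG : ∀ m (p : ℝ × ℝ), |a m p| ≤ Kglob N n * ((m + n).choose n : ℕ))
    (hbG : ∀ m (p : ℝ × ℝ), |b m p| ≤ Kglob N n * ((m + n).choose n : ℕ))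
    (hArep : ∀ p : ℝ × ℝ, p ∈ Tri → ∀ t ∈ Set.Ioo (0:ℝ) 1,
      A p.1 p.2 t = ∑' m, a m p * t ^ m)
    (hBrep : ∀ p : ℝ × ℝ, p ∈ Tri → ∀ t ∈ Set.Ioo (0:ℝ) 1,
      B p.1 p.2 t = ∑' m, b m p * t ^ m)
    (hH : ∀ ξ η t : ℝ, H ξ η t = ∫ τ in η..ξ, ∫ s in (0:ℝ)..η,
        ((e1 τ s t * A τ s t + c1 * pT A τ s t) + (e2 τ s t * B τ s t + c2 * pT B τ s t))) :
    ∃ a' : ℕ → ℝ × ℝ → ℝ,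
      (∀ m, Continuous (a' m)) ∧
      (∀ m (p : ℝ × ℝ), p ∈ Tri →
        |a' m p| ≤ Bnd N (n + 1) p * ((m + (n + 1)).choose (n + 1) : ℕ)) ∧
      (∀ m (p : ℝ × ℝ), |a' m p| ≤ Kglob N (n + 1) * ((m + (n + 1)).choose (n + 1) : ℕ)) ∧
      (∀ p : ℝ × ℝ, p ∈ Tri → ∀ t ∈ Set.Ioo (0:ℝ) 1,
        H p.1 p.2 t = ∑' m, a' m p * t ^ m) := by
  have hN0 : (0:ℝ) < N := by linarith
  -- the coefficient integrand
  set Cm : ℕ → ℝ × ℝ → ℝ := fun m q =>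
    (∑ j ∈ Finset.range (m + 1), d1 j q * a (m - j) q) + c1 * (((m : ℝ) + 1) * a (m + 1) q)
    + ((∑ j ∈ Finset.range (m + 1), d2 j q * b (m - j) q) + c2 * (((m : ℝ) + 1) * b (m + 1) q))
    with hCm_def
  have hCmC : ∀ m, Continuous (Cm m) := by
    intro m
    apply Continuous.add
    apply Continuous.add
    · exact continuous_finset_sum _ fun j _ => (hd1c j).mul (haC (m - j))
    · exact continuous_const.mul (continuous_const.mul (haC (m + 1)))
    apply Continuous.add
    · exact continuous_finset_sum _ fun j _ => (hd2c j).mul (hbC (m - j))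
    · exact continuous_const.mul (continuous_const.mul (hbC (m + 1)))
  -- the key pointwise bound
  have key : ∀ m (q : ℝ × ℝ) (M : ℝ), 0 ≤ M →
      (∀ k, |a k q| ≤ M * ((k + n).choose n : ℕ)) →
      (∀ k, |b k q| ≤ M * ((k + n).choose n : ℕ)) →
      |Cm m q| ≤ 2 * N * ((n : ℝ) + 2) * ((m + n + 1).choose (n + 1) : ℕ) * M := by
    intro m q M hM haq hbq
    have hrow : ∀ (d : ℕ → ℝ × ℝ → ℝ) (c : ℝ) (f : ℕ → ℝ × ℝ → ℝ),
        (∀ j p, |d j p| ≤ N) → |c| ≤ N →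
        (∀ k, |f k q| ≤ M * ((k + n).choose n : ℕ)) →
        |(∑ j ∈ Finset.range (m + 1), d j q * f (m - j) q) + c * (((m : ℝ) + 1) * f (m + 1) q)|
          ≤ N * ((n : ℝ) + 2) * ((m + n + 1).choose (n + 1) : ℕ) * M := by
      intro d c f hdb hcb hfq
      have h1 : |∑ j ∈ Finset.range (m + 1), d j q * f (m - j) q|
          ≤ N * M * ((m + n + 1).choose (n + 1) : ℕ) := by
        calc |∑ j ∈ Finset.range (m + 1), d j q * f (m - j) q|
            ≤ ∑ j ∈ Finset.range (m + 1), |d j q * f (m - j) q| :=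
              Finset.abs_sum_le_sum_abs _ _
          _ ≤ ∑ j ∈ Finset.range (m + 1), N * (M * (((m - j) + n).choose n : ℕ)) := by
              refine Finset.sum_le_sum fun j _ => ?_
              rw [abs_mul]
              exact mul_le_mul (hdb j q) (hfq (m - j)) (abs_nonneg _)
                (by linarith)
          _ = N * M * ∑ j ∈ Finset.range (m + 1), (((m - j) + n).choose n : ℝ) := by
              rw [Finset.mul_sum]; congr 1; funext j; ring
          _ = N * M * ((m + n + 1).choose (n + 1) : ℕ) := by
              rw [← Nat.cast_sum, sum_choose_sub]
      have h2 : |c * (((m : ℝ) + 1) * f (m + 1) q)|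
          ≤ N * (M * (((n : ℝ) + 1) * ((m + n + 1).choose (n + 1) : ℕ))) := by
        rw [abs_mul, abs_mul, abs_of_nonneg (by positivity : (0:ℝ) ≤ (m : ℝ) + 1)]
        have hf1 : |f (m + 1) q| ≤ M * (((m + 1) + n).choose n : ℕ) := hfq (m + 1)
        have hcast : ((m : ℝ) + 1) * (((m + 1 + n).choose n : ℕ) : ℝ)
            = ((n : ℝ) + 1) * (((m + n + 1).choose (n + 1) : ℕ) : ℝ) := by
          have h := deriv_choose_id n m
          have h1 : m + 1 + n = m + n + 1 := by omega
          rw [h1]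
          exact_mod_cast congrArg (Nat.cast (R := ℝ)) h
        calc |c| * (((m : ℝ) + 1) * |f (m + 1) q|)
            ≤ N * (((m : ℝ) + 1) * (M * (((m + 1 + n).choose n : ℕ) : ℝ))) := by
              apply mul_le_mul hcb _ (by positivity) (by linarith)
              exact mul_le_mul_of_nonneg_left hf1 (by positivity)
          _ = M * (((m : ℝ) + 1) * (((m + 1 + n).choose n : ℕ) : ℝ)) * N := by ring
          _ = M * (((n : ℝ) + 1) * (((m + n + 1).choose (n + 1) : ℕ) : ℝ)) * N := by
              rw [hcast]
          _ = N * (M * (((n : ℝ) + 1) * ((m + n + 1).choose (n + 1) : ℕ))) := by ring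
      calc |(∑ j ∈ Finset.range (m + 1), d j q * f (m - j) q)
            + c * (((m : ℝ) + 1) * f (m + 1) q)|
          ≤ |∑ j ∈ Finset.range (m + 1), d j q * f (m - j) q|
            + |c * (((m : ℝ) + 1) * f (m + 1) q)| := abs_add_le _ _
        _ ≤ N * M * ((m + n + 1).choose (n + 1) : ℕ)
            + N * (M * (((n : ℝ) + 1) * ((m + n + 1).choose (n + 1) : ℕ))) :=
            add_le_add h1 h2
        _ = N * ((n : ℝ) + 2) * ((m + n + 1).choose (n + 1) : ℕ) * M := by ring
    calc |Cm m q| ≤ |(∑ j ∈ Finset.range (m + 1), d1 j q * a (m - j) q)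
            + c1 * (((m : ℝ) + 1) * a (m + 1) q)|
          + |(∑ j ∈ Finset.range (m + 1), d2 j q * b (m - j) q)
            + c2 * (((m : ℝ) + 1) * b (m + 1) q)| := by
          rw [hCm_def]; exact abs_add_le _ _
      _ ≤ N * ((n : ℝ) + 2) * ((m + n + 1).choose (n + 1) : ℕ) * M
          + N * ((n : ℝ) + 2) * ((m + n + 1).choose (n + 1) : ℕ) * M :=
          add_le_add (hrow d1 c1 a hd1b hc1 haq) (hrow d2 c2 b hd2b hc2 hbq)
      _ = 2 * N * ((n : ℝ) + 2) * ((m + n + 1).choose (n + 1) : ℕ) * M := by ring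
  -- continuity of the inner parametric integral
  have hInnerC : ∀ m, Continuous (fun q : ℝ × ℝ => ∫ s in (0:ℝ)..q.2, Cm m (q.1, s)) := by
    intro m
    exact intervalIntegral.continuous_parametric_primitive_of_continuous
      (f := fun τ s => Cm m (τ, s)) (hCmC m)
  set raw : ℕ → ℝ × ℝ → ℝ :=
    fun m p => ∫ τ in p.2..p.1, ∫ s in (0:ℝ)..p.2, Cm m (τ, s) with hraw_def
  have hrawC : ∀ m, Continuous (raw m) := by
    intro m
    have hg := hInnerC m
    have h1 : Continuous (fun p : ℝ × ℝ =>
        ∫ τ in (0:ℝ)..p.1, ∫ s in (0:ℝ)..p.2, Cm m (τ, s)) := by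
      apply intervalIntegral.continuous_parametric_intervalIntegral_of_continuous
        (f := fun (p : ℝ × ℝ) (τ : ℝ) => ∫ s in (0:ℝ)..p.2, Cm m (τ, s))
        ?_ continuous_fst
      exact hg.comp (continuous_snd.prodMk (continuous_snd.comp continuous_fst))
    have h2 : Continuous (fun p : ℝ × ℝ =>
        ∫ τ in (0:ℝ)..p.2, ∫ s in (0:ℝ)..p.2, Cm m (τ, s)) := by
      apply intervalIntegral.continuous_parametric_intervalIntegral_of_continuous
        (f := fun (p : ℝ × ℝ) (τ : ℝ) => ∫ s in (0:ℝ)..p.2, Cm m (τ, s))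
        ?_ continuous_snd
      exact hg.comp (continuous_snd.prodMk (continuous_snd.comp continuous_fst))
    refine (h1.sub h2).congr fun p => ?_
    have hint : ∀ x : ℝ, IntervalIntegrable
        (fun τ => ∫ s in (0:ℝ)..p.2, Cm m (τ, s)) MeasureTheory.volume 0 x := fun x =>
      (hg.comp (continuous_id.prodMk continuous_const)).intervalIntegrable 0 x
    exact intervalIntegral.integral_interval_sub_left (hint p.1) (hint p.2)
  -- the sharp bound on Tri
  have hrawT : ∀ m (p : ℝ × ℝ), p ∈ Tri →
      |raw m p| ≤ Bnd N (n + 1) p * ((m + (n + 1)).choose (n + 1) : ℕ) := by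
    rintro m ⟨ξ, η⟩ ⟨h1, h2, h3⟩
    simp only at h1 h2 h3
    have hp1 : (0:ℝ) ≤ ξ := h1.trans h2
    have hη1 : η ≤ 1 := h2.trans h3
    set cc : ℝ := (((m + n + 1).choose (n + 1) : ℕ) : ℝ) with hcc
    have hcc0 : 0 ≤ cc := Nat.cast_nonneg _
    set R : ℝ := 2 * N * ((n : ℝ) + 2) * cc with hR
    have hR0 : 0 ≤ R := by positivity
    have hfac : (0:ℝ) < (n.factorial : ℝ) := Nat.cast_pos.2 n.factorial_pos
    have hIb : ∀ τ ∈ Set.Icc η ξ,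
        ‖∫ s in (0:ℝ)..η, Cm m (τ, s)‖
          ≤ R * ((4 * τ) ^ n * (N ^ (n + 1) / (n.factorial : ℝ)))
            * (η ^ (n + 1) / ((n : ℝ) + 1)) := by
      intro τ hτ
      have hτ0 : 0 ≤ τ := h1.trans hτ.1
      have hτ1 : τ ≤ 1 := hτ.2.trans h3
      have hbnd : ∀ s ∈ Set.Ioc (0:ℝ) η, ‖Cm m (τ, s)‖
          ≤ R * ((4 * τ) ^ n * (N ^ (n + 1) / (n.factorial : ℝ))) * s ^ n := by
        intro s hs
        have hsT : (τ, s) ∈ Tri := ⟨hs.1.le, hs.2.trans hτ.1, hτ1⟩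
        have hk := key m (τ, s) (Bnd N n (τ, s)) (Bnd_nonneg hN1 hsT)
          (fun k => haT k (τ, s) hsT) (fun k => hbT k (τ, s) hsT)
        rw [Real.norm_eq_abs]
        refine hk.trans (le_of_eq ?_)
        show 2 * N * ((n : ℝ) + 2) * cc * ((4 * τ * s) ^ n * N ^ (n + 1) / (n.factorial : ℝ)) = _
        rw [show (4 * τ * s : ℝ) = (4 * τ) * s by ring, mul_pow]
        ring
      calc ‖∫ s in (0:ℝ)..η, Cm m (τ, s)‖
          ≤ |∫ s in (0:ℝ)..η,
              R * ((4 * τ) ^ n * (N ^ (n + 1) / (n.factorial : ℝ))) * s ^ n| := by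
            apply intervalIntegral.norm_integral_le_abs_of_norm_le
            · rw [Set.uIoc_of_le h1]
              filter_upwards [MeasureTheory.ae_restrict_mem measurableSet_Ioc] with s hs
              exact hbnd s hs
            · exact ((continuous_const.mul (continuous_pow n)).intervalIntegrable 0 η)
        _ = R * ((4 * τ) ^ n * (N ^ (n + 1) / (n.factorial : ℝ)))
            * (η ^ (n + 1) / ((n : ℝ) + 1)) := by
            rw [intervalIntegral.integral_const_mul, integral_pow]
            have hc0 : (0:ℝ) ≤ R * ((4 * τ) ^ n * (N ^ (n + 1) / (n.factorial : ℝ))) :=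
              mul_nonneg hR0 (mul_nonneg (pow_nonneg (by linarith) n) (by positivity))
            rw [abs_of_nonneg (mul_nonneg hc0 (div_nonneg
              (by rw [zero_pow (Nat.succ_ne_zero n), sub_zero]; exact pow_nonneg h1 _) (by positivity)))]
            rw [zero_pow (Nat.succ_ne_zero n)]; push_cast; ring
    have houter : |raw m (ξ, η)|
        ≤ R * (4:ℝ) ^ n * (N ^ (n + 1) / (n.factorial : ℝ))
          * (η ^ (n + 1) / ((n : ℝ) + 1)) * (ξ ^ (n + 1) / ((n : ℝ) + 1)) := by
      have hbnd : ∀ τ ∈ Set.Ioc η ξ, ‖∫ s in (0:ℝ)..η, Cm m (τ, s)‖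
          ≤ (R * (4:ℝ) ^ n * (N ^ (n + 1) / (n.factorial : ℝ))
            * (η ^ (n + 1) / ((n : ℝ) + 1))) * τ ^ n := by
        intro τ hτ
        refine (hIb τ ⟨hτ.1.le, hτ.2⟩).trans (le_of_eq ?_)
        rw [mul_pow (4:ℝ) τ n]
        ring
      rw [← Real.norm_eq_abs]
      calc ‖raw m (ξ, η)‖
          ≤ |∫ τ in η..ξ, (R * (4:ℝ) ^ n * (N ^ (n + 1) / (n.factorial : ℝ))
            * (η ^ (n + 1) / ((n : ℝ) + 1))) * τ ^ n| := by
            apply intervalIntegral.norm_integral_le_abs_of_norm_le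
            · rw [Set.uIoc_of_le h2]
              filter_upwards [MeasureTheory.ae_restrict_mem measurableSet_Ioc] with τ hτ
              exact hbnd τ hτ
            · exact ((continuous_const.mul (continuous_pow n)).intervalIntegrable η ξ)
        _ ≤ R * (4:ℝ) ^ n * (N ^ (n + 1) / (n.factorial : ℝ))
            * (η ^ (n + 1) / ((n : ℝ) + 1)) * (ξ ^ (n + 1) / ((n : ℝ) + 1)) := by
            rw [intervalIntegral.integral_const_mul, integral_pow]
            have hpow0 : (0:ℝ) ≤ η ^ (n + 1) := pow_nonneg h1 _
            have hpow : η ^ (n + 1) ≤ ξ ^ (n + 1) := pow_le_pow_left₀ h1 h2 _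
            have hc0 : (0:ℝ) ≤ R * (4:ℝ) ^ n * (N ^ (n + 1) / (n.factorial : ℝ))
                * (η ^ (n + 1) / ((n : ℝ) + 1)) :=
              mul_nonneg (mul_nonneg (mul_nonneg hR0 (by positivity)) (by positivity))
                (div_nonneg hpow0 (by positivity))
            rw [abs_of_nonneg (mul_nonneg hc0 (div_nonneg (by linarith) (by positivity)))]
            apply mul_le_mul_of_nonneg_left _ hc0
            exact (div_le_div_iff_of_pos_right (by positivity)).mpr (by linarith)
    refine houter.trans ?_
    have hn1 : ((n:ℝ) + 1) ≠ 0 := by positivity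
    have hfne : (n.factorial : ℝ) ≠ 0 := hfac.ne'
    have hxy : (0:ℝ) ≤ ξ * η := mul_nonneg hp1 h1
    have hidx : m + (n + 1) = m + n + 1 := by omega
    rw [hidx]
    have hfs : (((n + 1).factorial : ℕ) : ℝ) = ((n:ℝ) + 1) * (n.factorial : ℝ) := by
      rw [Nat.factorial_succ]; push_cast; ring
    have e1 : R * (4:ℝ) ^ n * (N ^ (n + 1) / (n.factorial : ℝ)) * (η ^ (n + 1) / ((n : ℝ) + 1))
        * (ξ ^ (n + 1) / ((n : ℝ) + 1))
        = (2 * ((n:ℝ) + 2) / (((n:ℝ) + 1) ^ 2))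
          * (N ^ (n + 2) * cc * (4:ℝ) ^ n * (ξ * η) ^ (n + 1) / (n.factorial : ℝ)) := by
      rw [hR]; field_simp; ring
    have e2 : Bnd N (n + 1) (ξ, η) * cc
        = (4 / ((n:ℝ) + 1))
          * (N ^ (n + 2) * cc * (4:ℝ) ^ n * (ξ * η) ^ (n + 1) / (n.factorial : ℝ)) := by
      show (4 * ξ * η) ^ (n + 1) * N ^ (n + 1 + 1) / (((n + 1).factorial : ℕ) : ℝ) * cc = _
      rw [hfs]; field_simp; ring
    rw [e1, e2]
    apply mul_le_mul_of_nonneg_right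
    · rw [div_le_div_iff₀ (by positivity) (by positivity)]
      nlinarith [Nat.cast_nonneg (α := ℝ) n]
    · apply div_nonneg _ (by positivity)
      exact mul_nonneg (mul_nonneg (mul_nonneg (by positivity) hcc0) (by positivity))
        (pow_nonneg hxy _)
  -- representation of H
  have hrep' : ∀ p : ℝ × ℝ, p ∈ Tri → ∀ t ∈ Set.Ioo (0:ℝ) 1,
      H p.1 p.2 t = ∑' m, raw m p * t ^ m := by
    rintro ⟨ξ, η⟩ ⟨h1, h2, h3⟩ t ⟨ht0, ht1⟩
    simp only at h1 h2 h3
    have hp1 : (0:ℝ) ≤ ξ := h1.trans h2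
    have hη1 : η ≤ 1 := h2.trans h3
    have hKg := Kglob_pos hN1 n
    have hgeom : Summable fun j : ℕ => N * t ^ j :=
      (summable_geometric_of_lt_one ht0.le ht1).mul_left N
    have hchoose : Summable fun m : ℕ => (((m + n).choose n : ℕ) : ℝ) * t ^ m :=
      (hasSum_choose_geom n ht0.le ht1).summable
    have hnormab : ∀ (f : ℕ → ℝ × ℝ → ℝ), (∀ m (p : ℝ × ℝ), |f m p| ≤ Kglob N n * ((m + n).choose n : ℕ)) →
        ∀ q : ℝ × ℝ, Summable fun m => ‖f m q * t ^ m‖ := by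
      intro f hf q
      refine Summable.of_nonneg_of_le (fun m => norm_nonneg _) (fun m => ?_)
        (hchoose.mul_left (Kglob N n))
      rw [Real.norm_eq_abs, abs_mul, abs_of_nonneg (by positivity : (0:ℝ) ≤ t ^ m)]
      calc |f m q| * t ^ m ≤ Kglob N n * ((m + n).choose n : ℕ) * t ^ m :=
            mul_le_mul_of_nonneg_right (hf m q) (by positivity)
        _ = Kglob N n * ((((m + n).choose n : ℕ) : ℝ) * t ^ m) := by ring
    have HS : ∀ q : ℝ × ℝ, q ∈ Tri →
        HasSum (fun m => Cm m q * t ^ m)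
          ((e1 q.1 q.2 t * A q.1 q.2 t + c1 * pT A q.1 q.2 t)
            + (e2 q.1 q.2 t * B q.1 q.2 t + c2 * pT B q.1 q.2 t)) := by
      intro q hq
      have hds : ∀ (d : ℕ → ℝ × ℝ → ℝ), (∀ j p, |d j p| ≤ N) →
          Summable fun j => ‖d j q * t ^ j‖ := by
        intro d hd
        refine Summable.of_nonneg_of_le (fun j => norm_nonneg _) (fun j => ?_) hgeom
        rw [Real.norm_eq_abs, abs_mul, abs_of_nonneg (by positivity : (0:ℝ) ≤ t ^ j)]
        exact mul_le_mul_of_nonneg_right (hd j q) (by positivity)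
      have hd1s := hds d1 hd1b
      have hd2s := hds d2 hd2b
      have has := hnormab a haG q
      have hbs := hnormab b hbG q
      have hrow : ∀ (d : ℕ → ℝ × ℝ → ℝ) (f : ℕ → ℝ × ℝ → ℝ)
          (e F : ℝ → ℝ → ℝ → ℝ) (c : ℝ),
          (Summable fun j => ‖d j q * t ^ j‖) → (Summable fun m => ‖f m q * t ^ m‖) →
          (∀ m (p : ℝ × ℝ), |f m p| ≤ Kglob N n * ((m + n).choose n : ℕ)) →
          (e q.1 q.2 t = ∑' j, d j q * t ^ j) →
          (∀ t' ∈ Set.Ioo (0:ℝ) 1, F q.1 q.2 t' = ∑' m, f m q * t' ^ m) →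
          HasSum (fun m : ℕ => ((∑ j ∈ Finset.range (m + 1), d j q * f (m - j) q)
              + c * (((m : ℝ) + 1) * f (m + 1) q)) * t ^ m)
            (e q.1 q.2 t * F q.1 q.2 t + c * pT F q.1 q.2 t) := by
        intro d f e F c hdsum hfsum hfG he hFrep
        have h1s := hasSum_sum_range_mul_of_summable_norm hdsum hfsum
        have hfe1 : (fun m : ℕ => ∑ k ∈ Finset.range (m + 1),
            (d k q * t ^ k) * (f (m - k) q * t ^ (m - k)))
            = fun m => (∑ k ∈ Finset.range (m + 1), d k q * f (m - k) q) * t ^ m := by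
          funext m
          rw [Finset.sum_mul]
          refine Finset.sum_congr rfl fun k hk => ?_
          have hk' : k ≤ m := Nat.lt_succ_iff.mp (Finset.mem_range.mp hk)
          have ht' : t ^ k * t ^ (m - k) = t ^ m := by
            rw [← pow_add, Nat.add_sub_cancel' hk']
          calc (d k q * t ^ k) * (f (m - k) q * t ^ (m - k))
              = d k q * f (m - k) q * (t ^ k * t ^ (m - k)) := by ring
            _ = d k q * f (m - k) q * t ^ m := by rw [ht']
        rw [hfe1, ← he, ← hFrep t ⟨ht0, ht1⟩] at h1s
        have hdF : HasSum (fun m : ℕ => ((m : ℝ) + 1) * f (m + 1) q * t ^ m)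
            (pT F q.1 q.2 t) :=
          hasSum_pT_of_rep (fun m => hfG m q) (fun t' ht' => hFrep t' ht') ⟨ht0, ht1⟩
        have h2s := hdF.mul_left c
        have hfe2 : (fun m : ℕ => c * (((m : ℝ) + 1) * f (m + 1) q * t ^ m))
            = fun m : ℕ => c * (((m : ℝ) + 1) * f (m + 1) q) * t ^ m := funext fun m => by ring
        rw [hfe2] at h2s
        have := h1s.add h2s
        have hfe3 : (fun m : ℕ => (∑ j ∈ Finset.range (m + 1), d j q * f (m - j) q) * t ^ m
            + c * (((m : ℝ) + 1) * f (m + 1) q) * t ^ m)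
            = fun m : ℕ => ((∑ j ∈ Finset.range (m + 1), d j q * f (m - j) q)
              + c * (((m : ℝ) + 1) * f (m + 1) q)) * t ^ m := funext fun m => by ring
        rwa [hfe3] at this
      have hrow1 := hrow d1 a e1 A c1 hd1s has haG (he1 q hq t ⟨ht0, ht1⟩)
        (fun t' ht' => hArep q hq t' ht')
      have hrow2 := hrow d2 b e2 B c2 hd2s hbs hbG (he2 q hq t ⟨ht0, ht1⟩)
        (fun t' ht' => hBrep q hq t' ht')
      have := hrow1.add hrow2
      have hfe : (fun m : ℕ => ((∑ j ∈ Finset.range (m + 1), d1 j q * a (m - j) q)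
            + c1 * (((m : ℝ) + 1) * a (m + 1) q)) * t ^ m
          + ((∑ j ∈ Finset.range (m + 1), d2 j q * b (m - j) q)
            + c2 * (((m : ℝ) + 1) * b (m + 1) q)) * t ^ m)
          = fun m => Cm m q * t ^ m := by
        funext m
        rw [hCm_def]
        ring
      rwa [hfe] at this
    -- the summable global bound for the coefficients
    set W : ℕ → ℝ := fun m =>
      2 * N * ((n : ℝ) + 2) * Kglob N n * (((m + n + 1).choose (n + 1) : ℕ) : ℝ) with hW_def
    have hW0 : ∀ m, 0 ≤ W m := by
      intro m
      rw [hW_def]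
      have := (Kglob_pos hN1 n).le
      positivity
    have hWsum : Summable fun m => W m * t ^ m := by
      have hbase := (hasSum_choose_geom (n + 1) ht0.le ht1).summable.mul_left
        (2 * N * ((n : ℝ) + 2) * Kglob N n)
      refine hbase.congr fun m => ?_
      rw [hW_def]
      have hidx : m + (n + 1) = m + n + 1 := by omega
      rw [hidx]
      ring
    have hWbd : ∀ m (q : ℝ × ℝ), |Cm m q| ≤ W m := by
      intro m q
      refine (key m q (Kglob N n) (Kglob_pos hN1 n).le
        (fun k => haG k q) (fun k => hbG k q)).trans (le_of_eq ?_)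
      rw [hW_def]; ring
    -- inner swap
    have claim1 : ∀ τ ∈ Set.Icc η ξ,
        (∫ s in (0:ℝ)..η, ((e1 τ s t * A τ s t + c1 * pT A τ s t)
          + (e2 τ s t * B τ s t + c2 * pT B τ s t)))
        = ∑' m, (∫ s in (0:ℝ)..η, Cm m (τ, s)) * t ^ m := by
      intro τ hτ
      have hic : Set.EqOn
          (fun s => (e1 τ s t * A τ s t + c1 * pT A τ s t)
            + (e2 τ s t * B τ s t + c2 * pT B τ s t))
          (fun s => ∑' m, Cm m (τ, s) * t ^ m) (Set.uIcc 0 η) := by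
        intro s hs
        rw [Set.uIcc_of_le h1] at hs
        have hsT : (τ, s) ∈ Tri := ⟨hs.1, hs.2.trans hτ.1, hτ.2.trans h3⟩
        exact ((HS (τ, s) hsT).tsum_eq).symm
      rw [intervalIntegral.integral_congr hic]
      have hswap := tsum_intervalIntegral_swap (F := fun m s => Cm m (τ, s) * t ^ m)
        (u := fun m => W m * t ^ m) h1
        (fun m => Continuous.mul ((hCmC m).comp (continuous_const.prodMk continuous_id))
          continuous_const)
        hWsum
        (fun m s => by
          rw [abs_mul, abs_of_nonneg (by positivity : (0:ℝ) ≤ t ^ m)]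
          exact mul_le_mul_of_nonneg_right (hWbd m (τ, s)) (by positivity))
      rw [hswap]
      exact tsum_congr fun m => intervalIntegral.integral_mul_const _ _
    -- outer swap
    rw [hH ξ η t]
    rw [intervalIntegral.integral_congr
      (g := fun τ => ∑' m, (∫ s in (0:ℝ)..η, Cm m (τ, s)) * t ^ m)
      (fun τ hτ => claim1 τ (by rwa [Set.uIcc_of_le h2] at hτ))]
    have hswap2 := tsum_intervalIntegral_swap
      (F := fun m τ => (∫ s in (0:ℝ)..η, Cm m (τ, s)) * t ^ m)
      (u := fun m => W m * t ^ m) h2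
      (fun m => Continuous.mul
        (intervalIntegral.continuous_parametric_intervalIntegral_of_continuous'
          (f := fun (τ : ℝ) (s : ℝ) => Cm m (τ, s)) (hCmC m) 0 η) continuous_const)
      hWsum
      (fun m τ => by
        rw [abs_mul, abs_of_nonneg (by positivity : (0:ℝ) ≤ t ^ m)]
        have hin : ‖∫ s in (0:ℝ)..η, Cm m (τ, s)‖ ≤ W m * |η - 0| := by
          apply intervalIntegral.norm_integral_le_of_norm_le_const
          intro x _
          rw [Real.norm_eq_abs]
          exact hWbd m (τ, x)
        rw [Real.norm_eq_abs] at hin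
        have hWm : |∫ s in (0:ℝ)..η, Cm m (τ, s)| ≤ W m := by
          refine hin.trans ?_
          rw [sub_zero, abs_of_nonneg h1]
          nlinarith [hW0 m]
        exact mul_le_mul_of_nonneg_right hWm (by positivity))
    rw [hswap2]
    exact tsum_congr fun m => by rw [intervalIntegral.integral_mul_const]
  -- assemble
  refine ⟨fun m p => raw m (clampT p), fun m => (hrawC m).comp continuous_clampT, ?_, ?_, ?_⟩
  · intro m p hp
    beta_reduce
    rw [clampT_eq_self hp]
    exact hrawT m p hp
  · intro m p
    exact (hrawT m (clampT p) (clampT_mem_Tri p)).trans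
      (mul_le_mul_of_nonneg_right (Bnd_le_Kglob hN1 (clampT_mem_Tri p)) (Nat.cast_nonneg _))
  · intro p hp t ht
    beta_reduce
    rw [hrep' p hp t ht]
    exact tsum_congr fun m => by rw [clampT_eq_self hp]

lemma base_lemma (N : ℝ) (hN1 : 1 ≤ N)
    (d : ℕ → ℝ × ℝ → ℝ) (hdc : ∀ j, Continuous (d j)) (hdb : ∀ j p, |d j p| ≤ N)
    (c : ℝ) (hc : |c| ≤ 1 / 2)
    (e F : ℝ → ℝ → ℝ → ℝ)
    (he : ∀ p : ℝ × ℝ, p ∈ Tri → ∀ t ∈ Set.Ioo (0:ℝ) 1,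
      e p.1 p.2 t = ∑' j, d j p * t ^ j)
    (hF : ∀ ξ η t : ℝ, F ξ η t = c * ∫ τ in η..ξ, e τ 0 t) :
    ∃ a : ℕ → ℝ × ℝ → ℝ,
      (∀ m, Continuous (a m)) ∧
      (∀ m (p : ℝ × ℝ), p ∈ Tri → |a m p| ≤ Bnd N 0 p * ((m + 0).choose 0 : ℕ)) ∧
      (∀ m (p : ℝ × ℝ), |a m p| ≤ Kglob N 0 * ((m + 0).choose 0 : ℕ)) ∧
      (∀ p : ℝ × ℝ, p ∈ Tri → ∀ t ∈ Set.Ioo (0:ℝ) 1,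
        F p.1 p.2 t = ∑' m, a m p * t ^ m) := by
  have hN0 : (0:ℝ) < N := by linarith
  set raw : ℕ → ℝ × ℝ → ℝ := fun m p => c * ∫ τ in p.2..p.1, d m (τ, 0) with hraw_def
  have hrawC : ∀ m, Continuous (raw m) := by
    intro m
    apply Continuous.mul continuous_const
    have h1 : Continuous (fun p : ℝ × ℝ => ∫ τ in (0:ℝ)..p.1, d m (τ, 0)) := by
      apply intervalIntegral.continuous_parametric_intervalIntegral_of_continuous
        (f := fun (_ : ℝ × ℝ) (τ : ℝ) => d m (τ, 0)) ?_ continuous_fst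
      exact (hdc m).comp ((continuous_snd).prodMk continuous_const)
    have h2 : Continuous (fun p : ℝ × ℝ => ∫ τ in (0:ℝ)..p.2, d m (τ, 0)) := by
      apply intervalIntegral.continuous_parametric_intervalIntegral_of_continuous
        (f := fun (_ : ℝ × ℝ) (τ : ℝ) => d m (τ, 0)) ?_ continuous_snd
      exact (hdc m).comp ((continuous_snd).prodMk continuous_const)
    refine (h1.sub h2).congr fun p => ?_
    have hint : ∀ x : ℝ, IntervalIntegrable (fun τ => d m (τ, 0))
        MeasureTheory.volume 0 x := fun x =>
      ((hdc m).comp (continuous_id.prodMk continuous_const)).intervalIntegrable 0 x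
    exact intervalIntegral.integral_interval_sub_left (hint p.1) (hint p.2)
  have hB0 : ∀ m (p : ℝ × ℝ), Bnd N 0 p * ((m + 0).choose 0 : ℕ) = N := by
    intro m p
    simp [Bnd]
  have hK0 : ∀ m, Kglob N 0 * ((m + 0).choose 0 : ℕ) = N := by
    intro m
    simp [Kglob]
  have hrawT : ∀ m (p : ℝ × ℝ), p ∈ Tri → |raw m p| ≤ N := by
    rintro m ⟨ξ, η⟩ ⟨h1, h2, h3⟩
    simp only at h1 h2 h3
    rw [hraw_def]
    have hi : ‖∫ τ in η..ξ, d m (τ, 0)‖ ≤ N * |ξ - η| := by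
      apply intervalIntegral.norm_integral_le_of_norm_le_const
      intro x _
      rw [Real.norm_eq_abs]
      exact hdb m (x, 0)
    rw [Real.norm_eq_abs] at hi
    have habs : |ξ - η| ≤ 1 := by rw [abs_of_nonneg (by linarith)]; linarith
    show |c * ∫ τ in η..ξ, d m (τ, 0)| ≤ N
    rw [abs_mul]
    have h4 : |c| * |∫ τ in η..ξ, d m (τ, 0)| ≤ (1/2) * (N * 1) := by
      apply mul_le_mul hc (hi.trans ?_) (abs_nonneg _) (by norm_num)
      exact mul_le_mul_of_nonneg_left habs (by linarith)
    linarith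
  refine ⟨fun m p => raw m (clampT p),
    fun m => (hrawC m).comp continuous_clampT, ?_, ?_, ?_⟩
  · intro m p hp
    beta_reduce
    rw [clampT_eq_self hp, hB0 m p]
    exact hrawT m p hp
  · intro m p
    rw [hK0 m]
    exact hrawT m (clampT p) (clampT_mem_Tri p)
  · rintro ⟨ξ, η⟩ ⟨h1, h2, h3⟩ t ⟨ht0, ht1⟩
    simp only at h1 h2 h3
    beta_reduce
    rw [hF ξ η t]
    have hic : Set.EqOn (fun τ => e τ 0 t)
        (fun τ => ∑' j, d j (τ, 0) * t ^ j) (Set.uIcc η ξ) := by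
      intro τ hτ
      rw [Set.uIcc_of_le h2] at hτ
      have hτT : (τ, 0) ∈ Tri := ⟨le_refl 0, h1.trans hτ.1, hτ.2.trans h3⟩
      exact he (τ, 0) hτT t ⟨ht0, ht1⟩
    rw [intervalIntegral.integral_congr hic]
    have hswap := tsum_intervalIntegral_swap (F := fun j τ => d j (τ, 0) * t ^ j)
      (u := fun j => N * t ^ j) h2
      (fun j => ((hdc j).comp (continuous_id.prodMk continuous_const)).mul continuous_const)
      ((summable_geometric_of_lt_one ht0.le ht1).mul_left N)
      (fun j x => by
        rw [abs_mul, abs_of_nonneg (by positivity : (0:ℝ) ≤ t ^ j)]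
        exact mul_le_mul_of_nonneg_right (hdb j (x, 0)) (by positivity))
    rw [hswap, ← tsum_mul_left]
    refine tsum_congr fun m => ?_
    rw [intervalIntegral.integral_mul_const, clampT_eq_self (⟨h1, h2, h3⟩ : ((ξ,η) : ℝ × ℝ) ∈ Tri)]
    show c * ((∫ τ in η..ξ, d m (τ, 0)) * t ^ m) = raw m (ξ, η) * t ^ m
    rw [hraw_def]
    ring

lemma final_bound {n : ℕ} {f : ℕ → ℝ} {B : ℝ} (hB : 0 ≤ B)
    (hTri : ∀ m, |f m| ≤ B * ((m + n).choose n : ℕ))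
    {t : ℝ} (ht : t ∈ Set.Ioo (0:ℝ) 1) :
    |∑' m, f m * t ^ m| ≤ B * ((1 - t)⁻¹) ^ (n + 1) := by
  obtain ⟨ht0, ht1⟩ := ht
  have hmaj : HasSum (fun m : ℕ => B * ((((m + n).choose n : ℕ) : ℝ) * t ^ m))
      (B * ((1 - t)⁻¹) ^ (n + 1)) := (hasSum_choose_geom n ht0.le ht1).mul_left B
  have hle : ∀ m : ℕ, ‖f m * t ^ m‖ ≤ B * ((((m + n).choose n : ℕ) : ℝ) * t ^ m) := by
    intro m
    rw [Real.norm_eq_abs, abs_mul, abs_of_nonneg (by positivity : (0:ℝ) ≤ t ^ m)]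
    calc |f m| * t ^ m ≤ B * (((m + n).choose n : ℕ) : ℝ) * t ^ m :=
          mul_le_mul_of_nonneg_right (hTri m) (by positivity)
      _ = B * ((((m + n).choose n : ℕ) : ℝ) * t ^ m) := by ring
  have hs : Summable fun m => ‖f m * t ^ m‖ :=
    Summable.of_nonneg_of_le (fun m => norm_nonneg _) hle hmaj.summable
  calc |∑' m, f m * t ^ m| ≤ ∑' m, ‖f m * t ^ m‖ := by
        rw [← Real.norm_eq_abs]
        exact norm_tsum_le_tsum_norm hs
    _ ≤ ∑' m, B * ((((m + n).choose n : ℕ) : ℝ) * t ^ m) :=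
        Summable.tsum_le_tsum hle hs hmaj.summable
    _ = B * ((1 - t)⁻¹) ^ (n + 1) := hmaj.tsum_eq

lemma zpow_neg_succ_eq {x : ℝ} (n : ℕ) : x ^ (-(n + 1 : ℤ)) = (x⁻¹) ^ (n + 1) := by
  rw [zpow_neg, inv_pow]
  norm_cast

/-- the factorial–geometric bound on the successive-approximation
iterates `(Gₙ, G_{c,n})` of the Volterra-type integral operator, obtained by the
method of dominants. -/
theorem successive_approximation_iterates_bound
    (p₁ p₂ q₁ q₂ N : ℝ)
    (hN1 : 1 ≤ N) (hNp₁ : |p₁| ≤ N) (hNp₂ : |p₂| ≤ N) (hNq₁ : |q₁| ≤ N) (hNq₂ : |q₂| ≤ N)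
    (δ δc : ℝ → ℝ → ℝ → ℝ)
    (dcoef dccoef : ℕ → ℝ → ℝ → ℝ)
    (hdcont : ∀ n, ContinuousOn (fun p : ℝ × ℝ => dcoef n p.1 p.2) Tri)
    (hdccont : ∀ n, ContinuousOn (fun p : ℝ × ℝ => dccoef n p.1 p.2) Tri)
    (hdbd : ∀ n, ∀ ξ η : ℝ, (ξ, η) ∈ Tri → |dcoef n ξ η| ≤ N)
    (hdcbd : ∀ n, ∀ ξ η : ℝ, (ξ, η) ∈ Tri → |dccoef n ξ η| ≤ N)
    (hδ : ∀ ξ η : ℝ, (ξ, η) ∈ Tri → ∀ t ∈ Ioo (0:ℝ) 1,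
      δ ξ η t = ∑' n, dcoef n ξ η * t ^ n)
    (hδc : ∀ ξ η : ℝ, (ξ, η) ∈ Tri → ∀ t ∈ Ioo (0:ℝ) 1,
      δc ξ η t = ∑' n, dccoef n ξ η * t ^ n)
    (G Gc : ℕ → ℝ → ℝ → ℝ → ℝ)
    (hG0 : ∀ ξ η t : ℝ, G 0 ξ η t = -(1 / 2) * ∫ τ in η..ξ, δ τ 0 t)
    (hGc0 : ∀ ξ η t : ℝ, Gc 0 ξ η t = (1 / 2) * ∫ τ in η..ξ, δc τ 0 t)
    (hGrec : ∀ n, ∀ ξ η t : ℝ,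
      G (n + 1) ξ η t
        = ∫ τ in η..ξ, ∫ s in (0:ℝ)..η,
            ((δ τ s t * G n τ s t + p₁ * pT (G n) τ s t)
              + (δc τ s t * Gc n τ s t + p₂ * pT (Gc n) τ s t)))
    (hGcrec : ∀ n, ∀ ξ η t : ℝ,
      Gc (n + 1) ξ η t
        = ∫ τ in η..ξ, ∫ s in (0:ℝ)..η,
            ((δ τ s t * Gc n τ s t + q₁ * pT (Gc n) τ s t)
              + (-δc τ s t * G n τ s t + q₂ * pT (G n) τ s t))) :
    ∀ n : ℕ, ∀ ξ η : ℝ, (ξ, η) ∈ Tri → ∀ t ∈ Ioo (0:ℝ) 1,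
      |G n ξ η t| ≤ (4 * ξ * η) ^ n * N ^ (n + 1) / (Nat.factorial n)
          * (1 - t) ^ (-(n + 1 : ℤ))
      ∧ |Gc n ξ η t| ≤ (4 * ξ * η) ^ n * N ^ (n + 1) / (Nat.factorial n)
          * (1 - t) ^ (-(n + 1 : ℤ)) := by
  -- clamped coefficient families
  set dE : ℕ → ℝ × ℝ → ℝ := fun j p => dcoef j (clampT p).1 (clampT p).2 with hdE_def
  set dcE : ℕ → ℝ × ℝ → ℝ := fun j p => dccoef j (clampT p).1 (clampT p).2 with hdcE_def
  have hdEc : ∀ j, Continuous (dE j) := fun j =>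
    (hdcont j).comp_continuous continuous_clampT clampT_mem_Tri
  have hdcEc : ∀ j, Continuous (dcE j) := fun j =>
    (hdccont j).comp_continuous continuous_clampT clampT_mem_Tri
  have hdEb : ∀ j p, |dE j p| ≤ N := fun j p => hdbd j _ _ (clampT_mem_Tri p)
  have hdcEb : ∀ j p, |dcE j p| ≤ N := fun j p => hdcbd j _ _ (clampT_mem_Tri p)
  have hδE : ∀ p : ℝ × ℝ, p ∈ Tri → ∀ t ∈ Ioo (0:ℝ) 1,
      δ p.1 p.2 t = ∑' j, dE j p * t ^ j := by
    intro p hp t ht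
    rw [hδ p.1 p.2 hp t ht]
    exact tsum_congr fun j => by rw [hdE_def]; beta_reduce; rw [clampT_eq_self hp]
  have hδcE : ∀ p : ℝ × ℝ, p ∈ Tri → ∀ t ∈ Ioo (0:ℝ) 1,
      δc p.1 p.2 t = ∑' j, dcE j p * t ^ j := by
    intro p hp t ht
    rw [hδc p.1 p.2 hp t ht]
    exact tsum_congr fun j => by rw [hdcE_def]; beta_reduce; rw [clampT_eq_self hp]
  have hδcEneg : ∀ p : ℝ × ℝ, p ∈ Tri → ∀ t ∈ Ioo (0:ℝ) 1,
      (fun x y z => -δc x y z) p.1 p.2 t = ∑' j, (fun j q => -dcE j q) j p * t ^ j := by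
    intro p hp t ht
    beta_reduce
    rw [hδcE p hp t ht, ← tsum_neg]
    exact tsum_congr fun j => by ring
  have hdcEnegb : ∀ j p, |(fun j (q : ℝ × ℝ) => -dcE j q) j p| ≤ N := by
    intro j p
    beta_reduce
    rw [abs_neg]
    exact hdcEb j p
  -- main induction
  have main : ∀ k : ℕ, ∃ a b : ℕ → ℝ × ℝ → ℝ,
      (∀ m, Continuous (a m)) ∧ (∀ m, Continuous (b m)) ∧
      (∀ m (p : ℝ × ℝ), p ∈ Tri → |a m p| ≤ Bnd N k p * ((m + k).choose k : ℕ)) ∧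
      (∀ m (p : ℝ × ℝ), p ∈ Tri → |b m p| ≤ Bnd N k p * ((m + k).choose k : ℕ)) ∧
      (∀ m (p : ℝ × ℝ), |a m p| ≤ Kglob N k * ((m + k).choose k : ℕ)) ∧
      (∀ m (p : ℝ × ℝ), |b m p| ≤ Kglob N k * ((m + k).choose k : ℕ)) ∧
      (∀ p : ℝ × ℝ, p ∈ Tri → ∀ t ∈ Ioo (0:ℝ) 1,
        G k p.1 p.2 t = ∑' m, a m p * t ^ m) ∧
      (∀ p : ℝ × ℝ, p ∈ Tri → ∀ t ∈ Ioo (0:ℝ) 1,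
        Gc k p.1 p.2 t = ∑' m, b m p * t ^ m) := by
    intro k
    induction k with
    | zero =>
        obtain ⟨a, ha1, ha2, ha3, ha4⟩ := base_lemma N hN1 dE hdEc hdEb (-(1/2))
          (by rw [abs_neg, abs_of_nonneg (by norm_num : (0:ℝ) ≤ 1/2)]) δ (G 0) hδE hG0
        obtain ⟨b, hb1, hb2, hb3, hb4⟩ := base_lemma N hN1 dcE hdcEc hdcEb (1/2)
          (by rw [abs_of_nonneg (by norm_num : (0:ℝ) ≤ 1/2)]) δc (Gc 0) hδcE hGc0
        exact ⟨a, b, ha1, hb1, ha2, hb2, ha3, hb3, ha4, hb4⟩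
    | succ k ih =>
        obtain ⟨a, b, haC, hbC, haT, hbT, haG, hbG, hArep, hBrep⟩ := ih
        obtain ⟨a', ha'1, ha'2, ha'3, ha'4⟩ := step_lemma N hN1 k dE dcE hdEc hdcEc
          hdEb hdcEb p₁ p₂ hNp₁ hNp₂ δ δc (G k) (Gc k) (G (k + 1)) hδE hδcE
          a b haC hbC haT hbT haG hbG hArep hBrep (hGrec k)
        obtain ⟨b', hb'1, hb'2, hb'3, hb'4⟩ := step_lemma N hN1 k dE
          (fun j q => -dcE j q) hdEc (fun j => (hdcEc j).neg)
          hdEb hdcEnegb q₁ q₂ hNq₁ hNq₂ δ (fun x y z => -δc x y z)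
          (Gc k) (G k) (Gc (k + 1)) hδE hδcEneg
          b a hbC haC hbT haT hbG haG hBrep hArep (hGcrec k)
        exact ⟨a', b', ha'1, hb'1, ha'2, hb'2, ha'3, hb'3, ha'4, hb'4⟩
  intro n ξ η hT t ht
  obtain ⟨a, b, -, -, haT, hbT, -, -, hArep, hBrep⟩ := main n
  have hBnd0 : (0:ℝ) ≤ Bnd N n (ξ, η) := Bnd_nonneg hN1 hT
  constructor
  · rw [show G n ξ η t = ∑' m, a m (ξ, η) * t ^ m from hArep (ξ, η) hT t ht]
    calc |∑' m, a m (ξ, η) * t ^ m| ≤ Bnd N n (ξ, η) * ((1 - t)⁻¹) ^ (n + 1) :=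
          final_bound hBnd0 (fun m => haT m (ξ, η) hT) ht
      _ = (4 * ξ * η) ^ n * N ^ (n + 1) / (Nat.factorial n) * (1 - t) ^ (-(n + 1 : ℤ)) := by
          rw [zpow_neg_succ_eq]
          rfl
  · rw [show Gc n ξ η t = ∑' m, b m (ξ, η) * t ^ m from hBrep (ξ, η) hT t ht]
    calc |∑' m, b m (ξ, η) * t ^ m| ≤ Bnd N n (ξ, η) * ((1 - t)⁻¹) ^ (n + 1) :=
          final_bound hBnd0 (fun m => hbT m (ξ, η) hT) ht
      _ = (4 * ξ * η) ^ n * N ^ (n + 1) / (Nat.factorial n) * (1 - t) ^ (-(n + 1 : ℤ)) := by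
          rw [zpow_neg_succ_eq]
          rfl
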